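/- Fix a real threshold θ > 0. Let x₁, …, x_T and x'₁, …, x'_{T'} be two real input sequences (possibly of different lengths) such that |x_t| ≤ θ and |x'_t| ≤ θ for all t and ∑_{t=1}^{T} x_t = ∑_{t=1}^{T'} x'_t. Then the inhibitory (PASCAL) integrate-and-fire neuron produces the same accumulated signed spike count on both sequences: ∑_{t=1}^{T} s_t = ∑_{t=1}^{T'} s'_t. In particular, the spike count depends only on the total accumulated input and not on the temporal order or decomposition of the spikes. -/
import Mathlib


/-- Signed spike of the inhibitory (PASCAL) IF neuron given total drive `w = v + x`:
`1` if `w ≥ θ`, `-1` if `w < 0`, else `0`. -/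
noncomputable def pSpike (θ w : ℝ) : ℤ :=
  if θ ≤ w then 1 else if w < 0 then -1 else 0

/-- Membrane potential of the inhibitory (PASCAL) integrate-and-fire neuron:
`v 0 = θ/2` and `v (t+1) = v t + x t - θ·s t`, where `x t` is the input at
timestep `t+1` and `s t` is the signed spike. -/
noncomputable def pV (θ : ℝ) (x : ℕ → ℝ) : ℕ → ℝ
  | 0 => θ / 2
  | t + 1 => pV θ x t + x t - θ * (pSpike θ (pV θ x t + x t) : ℝ)

/-- Signed spike emitted at timestep `t+1` (0-indexed `t`). -/
noncomputable def pS (θ : ℝ) (x : ℕ → ℝ) (t : ℕ) : ℤ :=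
  pSpike θ (pV θ x t + x t)

lemma pV_eq (θ : ℝ) (x : ℕ → ℝ) (T : ℕ) :
    pV θ x T = θ / 2 + ∑ t ∈ Finset.range T, x t
      - θ * (∑ t ∈ Finset.range T, pS θ x t : ℤ) := by
  induction T with
  | zero => simp [pV]
  | succ n ih =>
    have h : pV θ x (n + 1) = pV θ x n + x n - θ * (pS θ x n : ℝ) := rfl
    rw [h, ih, Finset.sum_range_succ, Finset.sum_range_succ]
    push_cast
    ring

lemma pV_bound (θ : ℝ) (hθ : 0 < θ) (x : ℕ → ℝ) (T : ℕ)
    (hx : ∀ t ∈ Finset.range T, |x t| ≤ θ) :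
    0 ≤ pV θ x T ∧ pV θ x T < θ := by
  induction T with
  | zero =>
    constructor <;> simp [pV] <;> linarith
  | succ n ih =>
    have hxn : |x n| ≤ θ := hx n (by simp)
    have hx' : ∀ t ∈ Finset.range n, |x t| ≤ θ := fun t ht =>
      hx t (Finset.mem_range.mpr (Nat.lt_succ_of_lt (Finset.mem_range.mp ht)))
    obtain ⟨h0, h1⟩ := ih hx'
    have hxl : -θ ≤ x n := neg_le_of_abs_le hxn
    have hxu : x n ≤ θ := le_of_abs_le hxn
    have h : pV θ x (n + 1) = pV θ x n + x n - θ * (pSpike θ (pV θ x n + x n) : ℝ) := rfl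
    rw [h, pSpike]
    split_ifs with h h'
    · push_cast; constructor <;> linarith
    · push_cast; constructor <;> linarith
    · push_cast; push_neg at h h'; constructor <;> linarith

theorem spike_count_eq_aux (θ : ℝ) (hθ : 0 < θ) (T T' : ℕ)
    (x x' : ℕ → ℝ)
    (hx : ∀ t ∈ Finset.range T, |x t| ≤ θ)
    (hx' : ∀ t ∈ Finset.range T', |x' t| ≤ θ)
    (hsum : ∑ t ∈ Finset.range T, x t = ∑ t ∈ Finset.range T', x' t) :
    ∑ t ∈ Finset.range T, pS θ x t = ∑ t ∈ Finset.range T', pS θ x' t := by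
  have e1 := pV_eq θ x T
  have e2 := pV_eq θ x' T'
  obtain ⟨b1, b2⟩ := pV_bound θ hθ x T hx
  obtain ⟨b3, b4⟩ := pV_bound θ hθ x' T' hx'
  set a : ℤ := ∑ t ∈ Finset.range T, pS θ x t
  set b : ℤ := ∑ t ∈ Finset.range T', pS θ x' t
  by_contra hne
  rcases lt_or_gt_of_ne hne with h | h
  · have : (a : ℝ) + 1 ≤ b := by exact_mod_cast h
    nlinarith
  · have : (b : ℝ) + 1 ≤ a := by exact_mod_cast h
    nlinarith

/-- The accumulated signed spike count of the inhibitory (PASCAL) IF neuron depends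
only on the total accumulated input: two bounded input sequences (possibly of
different lengths) with equal sums yield equal spike counts. -/
theorem pascal_spike_count_invariant (θ : ℝ) (hθ : 0 < θ) (T T' : ℕ)
    (x x' : ℕ → ℝ)
    (hx : ∀ t ∈ Finset.range T, |x t| ≤ θ)
    (hx' : ∀ t ∈ Finset.range T', |x' t| ≤ θ)
    (hsum : ∑ t ∈ Finset.range T, x t = ∑ t ∈ Finset.range T', x' t) :
    ∑ t ∈ Finset.range T, pS θ x t = ∑ t ∈ Finset.range T', pS θ x' t := by
  exact spike_count_eq_aux θ hθ T T' x x' hx hx' hsum
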